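/- The moment of the type I Jacobi–Piñeiro polynomial against the i-th weight admits a single-${}_{p+2}F_{p+1}$ evaluation: with notation as in the definition of P^{(i)}, for every j ∈ ℕ₀, ∫₀¹ x^j P^{(i)}(x) x^{α_i}(1-x)^β dx = (-1)^{|n⃗|-1} \frac{\prod_{k=1}^p(α_k+β+|n⃗|)_{n_k}}{(n_i-1)! \prod_{k≠i}(α_k-α_i)_{n_k}} \frac{Γ(α_i+β+|n⃗|)(α_i+1)_j}{Γ(α_i+β+j+2)(β+1)_{|n⃗|-1}} \, {}_{p+2}F_{p+1}(-n_i+1, α_i+j+1, α_i+β+|n⃗|, (α_i+1-α_k-n_k)_{k≠i}; α_i+1, α_i+β+j+2, (α_i+1-α_k)_{k≠i}; 1). -/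

import Mathlib

open MeasureTheory intervalIntegral

/-- Pochhammer symbol `(x)ₙ` on `ℝ`. -/
noncomputable def poch (x : ℝ) (n : ℕ) : ℝ := ∏ s ∈ Finset.range n, (x + s)

/-- The `i`-th type I Jacobi–Piñeiro polynomial for `p` weights. -/
noncomputable def JP (p : ℕ) (α : Fin p → ℝ) (β : ℝ) (n : Fin p → ℕ) (i : Fin p)
    (x : ℝ) : ℝ :=
  (-1) ^ ((∑ k, n k) - 1) *
    ((∏ k, poch (α k + β + (∑ k, n k : ℕ)) (n k)) /
      (((n i - 1).factorial : ℝ) *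
        ∏ k ∈ Finset.univ.erase i, poch (α k - α i) (n k))) *
    (Real.Gamma (α i + β + (∑ k, n k : ℕ)) /
      (Real.Gamma (β + (∑ k, n k : ℕ)) * Real.Gamma (α i + 1))) *
    ∑ l ∈ Finset.range (n i),
      poch (-(n i : ℝ) + 1) l * poch (α i + β + (∑ k, n k : ℕ)) l *
          (∏ k ∈ Finset.univ.erase i, poch (α i + 1 - α k - n k) l) /
          (poch (α i + 1) l *
            (∏ k ∈ Finset.univ.erase i, poch (α i + 1 - α k) l) * (l.factorial : ℝ)) *
        x ^ l

lemma poch_pos {x : ℝ} (hx : 0 < x) (n : ℕ) : 0 < poch x n :=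
  Finset.prod_pos fun s _ => by positivity

lemma Gamma_poch {x : ℝ} (hx : 0 < x) (n : ℕ) :
    Real.Gamma (x + n) = Real.Gamma x * poch x n := by
  induction n with
  | zero => simp [poch]
  | succ m ih =>
      have hxm : (x + m) ≠ 0 := by positivity
      have h1 : Real.Gamma (x + ((m+1:ℕ):ℝ)) = (x + m) * Real.Gamma (x + m) := by
        rw [show x + ((m+1:ℕ):ℝ) = (x + m) + 1 by push_cast; ring, Real.Gamma_add_one hxm]
      rw [h1, ih]; simp only [poch]; rw [Finset.prod_range_succ]
      ring

lemma poch_add (x : ℝ) (m l : ℕ) :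
    poch x (m + l) = poch x m * poch (x + m) l := by
  rw [poch, Finset.prod_range_add, ← poch]
  congr 1
  exact Finset.prod_congr rfl fun s _ => by push_cast; ring

lemma myBeta_integrable {a b : ℝ} (ha : 0 < a) (hb : 0 < b) :
    IntervalIntegrable (fun x : ℝ => x ^ (a-1) * (1-x) ^ (b-1)) volume 0 1 := by
  have hc : IntervalIntegrable (fun x : ℝ => (x:ℂ) ^ ((a:ℂ)-1) * ((1:ℂ)-x) ^ ((b:ℂ)-1))
      volume 0 1 := by
    simpa using Complex.betaIntegral_convergent (u := (a:ℂ)) (v := (b:ℂ)) (by simpa) (by simpa)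
  rw [intervalIntegrable_iff] at hc ⊢
  have hre : IntegrableOn (fun x : ℝ => Complex.re ((x:ℂ) ^ ((a:ℂ)-1) * ((1:ℂ)-x) ^ ((b:ℂ)-1)))
      (Set.uIoc 0 1) volume := hc.re
  refine hre.congr_fun ?_ measurableSet_uIoc
  intro x hx
  rw [Set.uIoc_of_le (by norm_num : (0:ℝ) ≤ 1)] at hx
  have hx0 : (0:ℝ) ≤ x := le_of_lt hx.1
  have hx1 : (0:ℝ) ≤ 1 - x := by linarith [hx.2]
  simp only
  rw [show ((a:ℂ)-1) = ((a-1 : ℝ):ℂ) by push_cast; ring,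
    show ((b:ℂ)-1) = ((b-1 : ℝ):ℂ) by push_cast; ring,
    ← Complex.ofReal_cpow hx0, ← Complex.ofReal_one, ← Complex.ofReal_sub,
    ← Complex.ofReal_cpow hx1, ← Complex.ofReal_mul, Complex.ofReal_re]

lemma myBeta_eval {a b : ℝ} (ha : 0 < a) (hb : 0 < b) :
    ∫ x in (0:ℝ)..1, x ^ (a-1) * (1-x) ^ (b-1)
      = Real.Gamma a * Real.Gamma b / Real.Gamma (a+b) := by
  have h := Complex.Gamma_mul_Gamma_eq_betaIntegral (s := (a:ℂ)) (t := (b:ℂ))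
    (by simpa) (by simpa)
  have hbeta : Complex.betaIntegral (a:ℂ) (b:ℂ)
      = ((∫ x in (0:ℝ)..1, x ^ (a-1) * (1-x) ^ (b-1) : ℝ) : ℂ) := by
    rw [Complex.betaIntegral, ← intervalIntegral.integral_ofReal]
    refine intervalIntegral.integral_congr_ae (Filter.Eventually.of_forall ?_)
    intro x hx
    rw [Set.uIoc_of_le (by norm_num : (0:ℝ) ≤ 1)] at hx
    have hx0 : (0:ℝ) ≤ x := le_of_lt hx.1
    have hx1 : (0:ℝ) ≤ 1 - x := by linarith [hx.2]
    rw [show ((a:ℂ)-1) = ((a-1 : ℝ):ℂ) by push_cast; ring,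
      show ((b:ℂ)-1) = ((b-1 : ℝ):ℂ) by push_cast; ring,
      ← Complex.ofReal_cpow hx0, ← Complex.ofReal_one, ← Complex.ofReal_sub,
      ← Complex.ofReal_cpow hx1, ← Complex.ofReal_mul]
  rw [hbeta, ← Complex.ofReal_add, Complex.Gamma_ofReal, Complex.Gamma_ofReal,
    Complex.Gamma_ofReal, ← Complex.ofReal_mul, ← Complex.ofReal_mul] at h
  have h' := Complex.ofReal_injective h
  have hG : Real.Gamma (a+b) ≠ 0 := (Real.Gamma_pos_of_pos (by linarith)).ne'
  field_simp
  linarith [h']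

lemma moment_integrable {c b : ℝ} (hc : -1 < c) (hb : -1 < b) :
    IntervalIntegrable (fun x : ℝ => x ^ c * (1-x) ^ b) volume 0 1 := by
  have h := myBeta_integrable (a := c+1) (b := b+1) (by linarith) (by linarith)
  simpa using h

lemma moment_eval {c b : ℝ} (hc : -1 < c) (hb : -1 < b) :
    ∫ x in (0:ℝ)..1, x ^ c * (1-x) ^ b
      = Real.Gamma (c+1) * Real.Gamma (b+1) / Real.Gamma (c+b+2) := by
  have h := myBeta_eval (a := c+1) (b := b+1) (by linarith) (by linarith)
  simp only [add_sub_cancel_right] at h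
  rw [show c+1+(b+1) = c+b+2 from by ring] at h
  exact h

set_option maxHeartbeats 2000000 in
/-- The `j`-th moment of the type I Jacobi–Piñeiro polynomial against the `i`-th weight,
expressed through a single terminating `ₚ₊₂F_{p+1}(⋯;1)` sum. -/
theorem jacobiPineiro_typeI_moment (p : ℕ) (α : Fin p → ℝ) (β : ℝ)
    (hα : ∀ k, -1 < α k) (hβ : -1 < β)
    (hZ : ∀ k k', k ≠ k' → ∀ z : ℤ, α k - α k' ≠ (z : ℝ))
    (n : Fin p → ℕ) (hn : ∀ k, 1 ≤ n k) (i : Fin p) (j : ℕ) :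
    ∫ x in (0:ℝ)..1, x ^ j * JP p α β n i x * (x ^ α i * (1 - x) ^ β)
      = (-1) ^ ((∑ k, n k) - 1) *
          ((∏ k, poch (α k + β + (∑ k, n k : ℕ)) (n k)) /
            (((n i - 1).factorial : ℝ) *
              ∏ k ∈ Finset.univ.erase i, poch (α k - α i) (n k))) *
          (Real.Gamma (α i + β + (∑ k, n k : ℕ)) * poch (α i + 1) j /
            (Real.Gamma (α i + β + j + 2) * poch (β + 1) ((∑ k, n k) - 1))) *
          ∑ l ∈ Finset.range (n i),
            poch (-(n i : ℝ) + 1) l * poch (α i + j + 1) l *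
                poch (α i + β + (∑ k, n k : ℕ)) l *
                (∏ k ∈ Finset.univ.erase i, poch (α i + 1 - α k - n k) l) /
                (poch (α i + 1) l * poch (α i + β + j + 2) l *
                  (∏ k ∈ Finset.univ.erase i, poch (α i + 1 - α k) l) *
                  (l.factorial : ℝ)) := by
  have hai : (0:ℝ) < α i + 1 := by linarith [hα i]
  have hb1 : (0:ℝ) < β + 1 := by linarith
  have hN1 : 1 ≤ ∑ k, n k :=
    le_trans (hn i) (Finset.single_le_sum (f := fun k => n k) (fun k _ => Nat.zero_le _)
      (Finset.mem_univ i))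
  -- integrability of each summand's weight
  have hexp : ∀ l : ℕ, (-1:ℝ) < α i + ((j + l : ℕ):ℝ) := by
    intro l
    have : (0:ℝ) ≤ ((j + l : ℕ):ℝ) := Nat.cast_nonneg _
    linarith [hα i]
  -- Step 1: rewrite the integrand as a finite sum
  have hcong : (∫ x in (0:ℝ)..1, x ^ j * JP p α β n i x * (x ^ α i * (1 - x) ^ β))
      = ∫ x in (0:ℝ)..1, ∑ l ∈ Finset.range (n i),
          ((-1:ℝ) ^ ((∑ k, n k) - 1) *
            ((∏ k, poch (α k + β + (∑ k, n k : ℕ)) (n k)) /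
              (((n i - 1).factorial : ℝ) *
                ∏ k ∈ Finset.univ.erase i, poch (α k - α i) (n k))) *
            (Real.Gamma (α i + β + (∑ k, n k : ℕ)) /
              (Real.Gamma (β + (∑ k, n k : ℕ)) * Real.Gamma (α i + 1))) *
            (poch (-(n i : ℝ) + 1) l * poch (α i + β + (∑ k, n k : ℕ)) l *
              (∏ k ∈ Finset.univ.erase i, poch (α i + 1 - α k - n k) l) /
              (poch (α i + 1) l *
                (∏ k ∈ Finset.univ.erase i, poch (α i + 1 - α k) l) *
                (l.factorial : ℝ)))) *
          (x ^ (α i + ((j + l : ℕ):ℝ)) * (1 - x) ^ β) := by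
    refine intervalIntegral.integral_congr_ae (Filter.Eventually.of_forall ?_)
    intro x hx
    rw [Set.uIoc_of_le (by norm_num : (0:ℝ) ≤ 1)] at hx
    have hx0 : 0 < x := hx.1
    simp only [JP, Finset.mul_sum, Finset.sum_mul]
    refine Finset.sum_congr rfl fun l _ => ?_
    rw [show x ^ (α i + ((j + l : ℕ):ℝ)) = x ^ α i * (x ^ j * x ^ l) by
      rw [Real.rpow_add hx0, Real.rpow_natCast, pow_add]]
    ring
  rw [hcong, intervalIntegral.integral_finset_sum (fun l _ =>
    ((moment_integrable (hexp l) hβ).const_mul _))]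
  simp only [intervalIntegral.integral_const_mul]
  rw [Finset.mul_sum]
  refine Finset.sum_congr rfl fun l _ => ?_
  rw [moment_eval (hexp l) hβ]
  -- Gamma expansions
  have hg1 : Real.Gamma (β + ((∑ k, n k : ℕ):ℝ))
      = Real.Gamma (β + 1) * poch (β + 1) ((∑ k, n k) - 1) := by
    have h := Gamma_poch hb1 ((∑ k, n k) - 1)
    rw [show (β + 1) + (((∑ k, n k) - 1 : ℕ):ℝ) = β + ((∑ k, n k : ℕ):ℝ) by
      rw [Nat.cast_sub hN1]; push_cast; ring] at h
    exact h
  have hg2 : Real.Gamma (α i + ((j + l : ℕ):ℝ) + 1)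
      = Real.Gamma (α i + 1) * poch (α i + 1) j * poch (α i + (j:ℝ) + 1) l := by
    have h := Gamma_poch hai (j + l)
    rw [show (α i + 1) + ((j + l : ℕ):ℝ) = α i + ((j + l : ℕ):ℝ) + 1 by ring] at h
    rw [h, poch_add, show α i + 1 + (j:ℝ) = α i + (j:ℝ) + 1 by ring, mul_assoc]
  have hg3 : Real.Gamma (α i + ((j + l : ℕ):ℝ) + β + 2)
      = Real.Gamma (α i + β + (j:ℝ) + 2) * poch (α i + β + (j:ℝ) + 2) l := by
    have h := Gamma_poch (x := α i + β + (j:ℝ) + 2)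
      (by have : (0:ℝ) ≤ (j:ℝ) := Nat.cast_nonneg _; linarith [hα i]) l
    rw [show (α i + β + (j:ℝ) + 2) + (l:ℝ) = α i + ((j + l : ℕ):ℝ) + β + 2 by
      push_cast; ring] at h
    exact h
  rw [hg1, hg2, hg3]
  -- nonvanishing facts
  have hΓa : Real.Gamma (α i + 1) ≠ 0 := (Real.Gamma_pos_of_pos hai).ne'
  have hΓb : Real.Gamma (β + 1) ≠ 0 := (Real.Gamma_pos_of_pos hb1).ne'
  have hΓj2 : Real.Gamma (α i + β + (j:ℝ) + 2) ≠ 0 := by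
    refine (Real.Gamma_pos_of_pos ?_).ne'
    have : (0:ℝ) ≤ (j:ℝ) := Nat.cast_nonneg _
    linarith [hα i]
  have hpb : poch (β + 1) ((∑ k, n k) - 1) ≠ 0 := (poch_pos hb1 _).ne'
  have hpj : poch (α i + 1) j ≠ 0 := (poch_pos hai _).ne'
  have hpl : poch (α i + 1) l ≠ 0 := (poch_pos hai _).ne'
  have hpJ2 : poch (α i + β + (j:ℝ) + 2) l ≠ 0 := by
    refine (poch_pos ?_ _).ne'
    have : (0:ℝ) ≤ (j:ℝ) := Nat.cast_nonneg _
    linarith [hα i]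
  have hfac : ((l.factorial : ℕ):ℝ) ≠ 0 := Nat.cast_ne_zero.mpr l.factorial_ne_zero
  have hprod : (∏ k ∈ Finset.univ.erase i, poch (α i + 1 - α k) l) ≠ 0 := by
    refine Finset.prod_ne_zero_iff.mpr fun k hk => ?_
    have hik : i ≠ k := (Finset.ne_of_mem_erase hk).symm
    refine Finset.prod_ne_zero_iff.mpr fun s _ => ?_
    intro h0
    exact hZ i k hik (-(1 + s)) (by push_cast; linarith)
  have hfac2 : (((n i - 1).factorial : ℕ):ℝ) ≠ 0 :=
    Nat.cast_ne_zero.mpr (n i - 1).factorial_ne_zero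
  have hprod2 : (∏ k ∈ Finset.univ.erase i, poch (α k - α i) (n k)) ≠ 0 := by
    refine Finset.prod_ne_zero_iff.mpr fun k hk => ?_
    have hik : k ≠ i := Finset.ne_of_mem_erase hk
    refine Finset.prod_ne_zero_iff.mpr fun s _ => ?_
    intro h0
    exact hZ k i hik (-(s:ℤ)) (by push_cast; linarith)
  field_simp
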